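/- arXiv:1008.1894 — 2 statements merged into one kernel-verified Lean document; each statement's English description precedes it below -/
import Mathlib

section
/- For every k ∈ ℕ with k ≥ 1, every real x > 0, and every h ∈ ℂ with Re(h) > 1, the series below converge absolutely and β_{k,q}^h(x) = −k · Σ_{n=0}^{∞} q^{hn+x}·[x+n]_q^{k−1} + (h−1)(1−q) · Σ_{n=0}^{∞} q^{(h−1)n}·[x+n]_q^{k}. -/
open Complex Finset Filter

/-- Complex power `q^z := exp(z·log q)` for a real base `q`. -/
noncomputable def qcpow (q : ℝ) (z : ℂ) : ℂ := Complex.exp (z * (Real.log q : ℂ))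

/-- The complex `q`-number `[z]_q = (1 - q^z)/(1 - q)`. -/
noncomputable def qnum (q : ℝ) (z : ℂ) : ℂ := (1 - qcpow q z) / (1 - (q : ℂ))

/-- The real `q`-number `[y]_q = (1 - q^y)/(1 - q)` for real `y`. -/
noncomputable def qnumR (q : ℝ) (y : ℝ) : ℝ := (1 - Real.exp (y * Real.log q)) / (1 - q)

/-- The `(h,q)`-Bernoulli polynomial
`β_{n,q}^h(x) = (1-q)^{-n} ∑_{l=0}^{n} C(n,l) (-1)^l q^{lx} (l+h-1)/[l+h-1]_q`. -/
noncomputable def qbeta (q : ℝ) (h : ℂ) (n : ℕ) (x : ℝ) : ℂ :=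
  (1 - (q : ℂ))⁻¹ ^ n * ∑ l ∈ Finset.range (n + 1),
    (n.choose l : ℂ) * (-1) ^ l * qcpow q ((l : ℂ) * (x : ℂ)) *
      (((l : ℂ) + h - 1) / qnum q ((l : ℂ) + h - 1))

/-!
Expanding `[x+n]_q^m` binomially in the powers `q^{l(x+n)}` turns each series into a finite
combination of geometric series `∑ₙ q^{(l+c)n} = (1 - q^{l+c})⁻¹`, convergent since
`Re (l + c) > 0`. On the other side, splitting
`(l+h-1)/[l+h-1]_q = (1-q) l/(1-q^{l+h-1}) + (1-q)(h-1)/(1-q^{l+h-1})` in the definition of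
`β` and absorbing `l·C(k,l) = k·C(k-1,l-1)` by an index shift gives the same finite sums.
-/

lemma qcpow_add (q : ℝ) (a b : ℂ) : qcpow q (a + b) = qcpow q a * qcpow q b := by
  simp only [qcpow, add_mul, Complex.exp_add]

lemma qcpow_mul_natCast (q : ℝ) (c : ℂ) (n : ℕ) : qcpow q (c * n) = qcpow q c ^ n := by
  rw [qcpow, qcpow, ← Complex.exp_nat_mul]
  ring_nf

lemma norm_qcpow_lt_one {q : ℝ} (hq0 : 0 < q) (hq1 : q < 1) {c : ℂ} (hc : 0 < c.re) :
    ‖qcpow q c‖ < 1 := by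
  have hlog : c.re * Real.log q < 0 := mul_neg_of_pos_of_neg hc (Real.log_neg hq0 hq1)
  simpa [qcpow, Complex.norm_exp, Complex.mul_re] using hlog

lemma hasSum_qcpow_mul_natCast {q : ℝ} (hq0 : 0 < q) (hq1 : q < 1) {c : ℂ} (hc : 0 < c.re) :
    HasSum (fun n : ℕ => qcpow q (c * n)) (1 - qcpow q c)⁻¹ := by
  simpa only [qcpow_mul_natCast] using
    hasSum_geometric_of_norm_lt_one (norm_qcpow_lt_one hq0 hq1 hc)

lemma ofReal_qnumR (q y : ℝ) : (qnumR q y : ℂ) = (1 - qcpow q y) / (1 - q) := by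
  rw [qnumR, qcpow, ← Complex.ofReal_mul, ← Complex.ofReal_exp]
  push_cast
  ring

lemma ofReal_qnumR_pow (q y : ℝ) (m : ℕ) :
    (qnumR q y : ℂ) ^ m =
      (1 - (q : ℂ))⁻¹ ^ m *
        ∑ l ∈ range (m + 1), (m.choose l : ℂ) * (-1) ^ l * qcpow q (l * y) := by
  rw [ofReal_qnumR, div_pow, div_eq_inv_mul, ← inv_pow, sub_eq_neg_add (1 : ℂ) (qcpow q y),
    add_pow]
  refine congrArg _ (sum_congr rfl fun l _ => ?_)
  rw [mul_comm (l : ℂ), qcpow_mul_natCast]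
  ring

lemma hasSum_qcpow_mul_qnumR_pow {q : ℝ} (hq0 : 0 < q) (hq1 : q < 1) {c : ℂ} (hc : 0 < c.re)
    (y : ℝ) (m : ℕ) :
    HasSum (fun n : ℕ => qcpow q (c * n) * (qnumR q (y + n) : ℂ) ^ m)
      ((1 - (q : ℂ))⁻¹ ^ m * ∑ l ∈ range (m + 1),
        (m.choose l : ℂ) * (-1) ^ l * qcpow q (l * y) * (1 - qcpow q (l + c))⁻¹) := by
  have hre : ∀ l : ℕ, 0 < ((l : ℂ) + c).re := fun l => by
    simpa using add_pos_of_nonneg_of_pos (Nat.cast_nonneg l) hc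
  have hterm : ∀ n : ℕ, qcpow q (c * n) * (qnumR q (y + n) : ℂ) ^ m =
      ∑ l ∈ range (m + 1),
        (1 - (q : ℂ))⁻¹ ^ m * ((m.choose l : ℂ) * (-1) ^ l * qcpow q (l * y)) *
          qcpow q ((l + c) * n) := fun n => by
    rw [ofReal_qnumR_pow, mul_left_comm, mul_sum, mul_sum]
    refine sum_congr rfl fun l _ => ?_
    have hmul : qcpow q (c * n) * qcpow q (l * (y + n : ℝ)) =
        qcpow q (l * y) * qcpow q ((l + c) * n) := by
      rw [← qcpow_add, ← qcpow_add]
      push_cast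
      ring_nf
    linear_combination ((1 - (q : ℂ))⁻¹ ^ m * (m.choose l : ℂ) * (-1) ^ l) * hmul
  simp_rw [hterm, mul_sum, ← mul_assoc]
  exact hasSum_sum fun l _ => (hasSum_qcpow_mul_natCast hq0 hq1 (hre l)).mul_left _

lemma sum_range_natCast_mul_choose_mul {R : Type*} [CommSemiring R] (m : ℕ) (f : ℕ → R) :
    ∑ l ∈ range (m + 1 + 1), (l : R) * (m + 1).choose l * f l =
      (m + 1) * ∑ l ∈ range (m + 1), m.choose l * f (l + 1) := by
  rw [sum_range_succ', mul_sum]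
  simp only [Nat.cast_zero, zero_mul, add_zero]
  refine sum_congr rfl fun l _ => ?_
  have hchoose : ((m : R) + 1) * m.choose l = ((l : R) + 1) * (m + 1).choose (l + 1) := by
    simpa using congrArg (Nat.cast : ℕ → R)
      ((Nat.add_one_mul_choose_eq m l).trans (Nat.mul_comm _ _))
  rw [← mul_assoc, hchoose, Nat.cast_succ]

lemma div_qnum (q : ℝ) (z : ℂ) : z / qnum q z = (1 - q) * z * (1 - qcpow q z)⁻¹ := by
  rw [qnum, div_div_eq_mul_div, div_eq_mul_inv, mul_comm z]

lemma qbeta_eq_sum {q : ℝ} (hq : q ≠ 1) (h : ℂ) (k : ℕ) (x : ℝ) :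
    qbeta q h k x =
      -(k : ℂ) * (qcpow q x * ((1 - (q : ℂ))⁻¹ ^ (k - 1) * ∑ l ∈ range (k - 1 + 1),
        ((k - 1).choose l : ℂ) * (-1) ^ l * qcpow q (l * x) * (1 - qcpow q (l + h))⁻¹)) +
      (h - 1) * (1 - q) * ((1 - (q : ℂ))⁻¹ ^ k * ∑ l ∈ range (k + 1),
        (k.choose l : ℂ) * (-1) ^ l * qcpow q (l * x) * (1 - qcpow q (l + (h - 1)))⁻¹) := by
  set f : ℕ → ℂ := fun l => (-1) ^ l * qcpow q (l * x) * (1 - qcpow q (l + (h - 1)))⁻¹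
  have hdecomp : qbeta q h k x = (1 - (q : ℂ))⁻¹ ^ k * (1 - q) *
      (∑ l ∈ range (k + 1), (l : ℂ) * k.choose l * f l +
        (h - 1) * ∑ l ∈ range (k + 1), k.choose l * f l) := by
    simp only [qbeta, div_qnum, mul_sum, ← sum_add_distrib, f]
    refine sum_congr rfl fun l _ => ?_
    rw [add_sub_assoc]
    ring
  obtain _ | m := k
  · simp only [hdecomp, pow_zero, one_mul, zero_add, range_one, sum_singleton, CharP.cast_eq_zero,
      Nat.choose_self, Nat.cast_one, mul_one, zero_mul, neg_zero, zero_tsub, f]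
    ring
  have hshift : ∀ l : ℕ,
      f (l + 1) = -qcpow q x * ((-1) ^ l * qcpow q (l * x) * (1 - qcpow q (l + h))⁻¹) := by
    intro l
    simp only [f]
    push_cast
    rw [show (l : ℂ) + 1 + (h - 1) = l + h by ring, add_mul, one_mul, qcpow_add]
    ring
  rw [hdecomp, sum_range_natCast_mul_choose_mul]
  simp only [hshift, Nat.add_sub_cancel, mul_left_comm _ (-qcpow q x), ← mul_sum, f]
  simp only [mul_assoc]
  set S := ∑ l ∈ range (m + 1),
    (m.choose l : ℂ) * ((-1) ^ l * (qcpow q (l * x) * (1 - qcpow q (l + h))⁻¹))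
  have hq' : (1 - q : ℂ) ≠ 0 := sub_ne_zero.mpr (mod_cast hq.symm)
  push_cast
  linear_combination (-(1 - (q : ℂ))⁻¹ ^ m * qcpow q x * (m + 1) * S) * inv_mul_cancel₀ hq'

theorem qbeta_eq_tsum_general (q : ℝ) (hq0 : 0 < q) (hq1 : q < 1)
    (h : ℂ) (hh : 1 < h.re) (k : ℕ) (x : ℝ) :
    Summable (fun n : ℕ => qcpow q (h * (n : ℂ) + (x : ℂ)) * ((qnumR q (x + n) : ℂ) ^ (k - 1))) ∧
    Summable (fun n : ℕ => qcpow q ((h - 1) * (n : ℂ)) * ((qnumR q (x + n) : ℂ) ^ k)) ∧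
    qbeta q h k x =
      -(k : ℂ) * ∑' n : ℕ, qcpow q (h * (n : ℂ) + (x : ℂ)) * ((qnumR q (x + n) : ℂ) ^ (k - 1)) +
      (h - 1) * (1 - (q : ℂ)) *
        ∑' n : ℕ, qcpow q ((h - 1) * (n : ℂ)) * ((qnumR q (x + n) : ℂ) ^ k) := by
  have hs₁ : HasSum (fun n : ℕ => qcpow q (h * n + x) * (qnumR q (x + n) : ℂ) ^ (k - 1)) _ :=
    ((hasSum_qcpow_mul_qnumR_pow hq0 hq1 (c := h) (by linarith) x (k - 1)).mul_left
      (qcpow q x)).congr_fun fun n => by rw [qcpow_add, mul_comm (qcpow q _), mul_assoc]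
  have hs₂ := hasSum_qcpow_mul_qnumR_pow hq0 hq1 (c := h - 1) (by simpa using hh) x k
  refine ⟨hs₁.summable, hs₂.summable, ?_⟩
  rw [hs₁.tsum_eq, hs₂.tsum_eq]
  exact qbeta_eq_sum hq1.ne h k x

/-- series representation of `β_{k,q}^h(x)` for `x > 0`. -/
theorem qbeta_eq_tsum (q : ℝ) (hq0 : 0 < q) (hq1 : q < 1)
    (h : ℂ) (hh : 1 < h.re) (k : ℕ) (hk : 1 ≤ k) (x : ℝ) (hx : 0 < x) :
    Summable (fun n : ℕ => qcpow q (h * (n : ℂ) + (x : ℂ)) * ((qnumR q (x + n) : ℂ) ^ (k - 1))) ∧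
    Summable (fun n : ℕ => qcpow q ((h - 1) * (n : ℂ)) * ((qnumR q (x + n) : ℂ) ^ k)) ∧
    qbeta q h k x =
      -(k : ℂ) * ∑' n : ℕ, qcpow q (h * (n : ℂ) + (x : ℂ)) * ((qnumR q (x + n) : ℂ) ^ (k - 1)) +
      (h - 1) * (1 - (q : ℂ)) *
        ∑' n : ℕ, qcpow q ((h - 1) * (n : ℂ)) * ((qnumR q (x + n) : ℂ) ^ k) :=
  qbeta_eq_tsum_general q hq0 hq1 h hh k x
end

section
/- For every real x > 0, every h ∈ ℂ with Re(h) > 1, and every s ∈ ℂ with Re(s) > 1, the following integral representation holds: (1/Γ(s)) · ∫_0^∞ F_{χ,q}(−t, x | h) · t^{s−2} dt = L_q^h(s, χ | x), where F_{χ,q}(−t, x | h) = (h−1)(1−q) · Σ_{m=0}^{∞} q^{(h−1)m}·χ(m)·exp(−[x+m]_q·t) + t · Σ_{m=0}^{∞} q^{hm+x}·χ(m)·exp(−[x+m]_q·t), the integral is over real t > 0 with t^{s−2} = exp((s−2)·Real.log t), and both the integral and all series converge absolutely. -/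
open Complex Finset Filter

/-- The generalized `(h,q)`-Bernoulli polynomial attached to a Dirichlet character `χ` mod `f`:
`β_{n,χ,q}^h(x) = [f]_q^{n-1} ∑_{a=0}^{f-1} χ(a) q^{(h-1)a} β_{n,q^f}^h((x+a)/f)`. -/
noncomputable def qbetaChi (q : ℝ) (h : ℂ) (f : ℕ) (χ : DirichletCharacter ℂ f)
    (n : ℕ) (x : ℝ) : ℂ :=
  qnum q (f : ℂ) ^ ((n : ℤ) - 1) * ∑ a ∈ Finset.range f,
    χ (a : ZMod f) * qcpow q ((h - 1) * (a : ℂ)) * qbeta (q ^ f) h n ((x + a) / f)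

/-- The Hurwitz-type `(h,q)`-`L`-function
`L_q^h(s, χ | x) = ((h-1)(1-q)/(s-1)) ∑ q^{(h-1)m} χ(m)/[x+m]_q^{s-1}
  + ∑ q^{hm+x} χ(m)/[x+m]_q^s`. -/
noncomputable def hqLH (q : ℝ) (h s : ℂ) (f : ℕ) (χ : DirichletCharacter ℂ f) (x : ℝ) : ℂ :=
  ((h - 1) * (1 - (q : ℂ)) / (s - 1)) *
    (∑' m : ℕ, qcpow q ((h - 1) * (m : ℂ)) * χ (m : ZMod f) /
      Complex.exp ((s - 1) * (Real.log (qnumR q (x + m)) : ℂ))) +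
  ∑' m : ℕ, qcpow q (h * (m : ℂ) + (x : ℂ)) * χ (m : ZMod f) /
    Complex.exp (s * (Real.log (qnumR q (x + m)) : ℂ))

/-- The Dirichlet-type `(h,q)`-`L`-function
`L_q^h(s, χ) = ((h-1)(1-q)/(s-1)) ∑_{m≥1} q^{(h-1)m} χ(m)/[m]_q^{s-1}
  + ∑_{m≥1} q^{hm} χ(m)/[m]_q^s`. -/
noncomputable def hqL (q : ℝ) (h s : ℂ) (f : ℕ) (χ : DirichletCharacter ℂ f) : ℂ :=
  ((h - 1) * (1 - (q : ℂ)) / (s - 1)) *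
    (∑' m : ℕ, qcpow q ((h - 1) * ((m : ℂ) + 1)) * χ ((m + 1 : ℕ) : ZMod f) /
      Complex.exp ((s - 1) * (Real.log (qnumR q ((m : ℝ) + 1)) : ℂ))) +
  ∑' m : ℕ, qcpow q (h * ((m : ℂ) + 1)) * χ ((m + 1 : ℕ) : ZMod f) /
    Complex.exp (s * (Real.log (qnumR q ((m : ℝ) + 1)) : ℂ))

/-- `F_{χ,q}(-t, x | h) = (h-1)(1-q) ∑ q^{(h-1)m} χ(m) e^{-[x+m]_q t}
  + t ∑ q^{hm+x} χ(m) e^{-[x+m]_q t}` for real `t`. -/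
noncomputable def FchiNeg (q : ℝ) (h : ℂ) (f : ℕ) (χ : DirichletCharacter ℂ f)
    (x t : ℝ) : ℂ :=
  (h - 1) * (1 - (q : ℂ)) *
    (∑' m : ℕ, qcpow q ((h - 1) * (m : ℂ)) * χ (m : ZMod f) *
      Complex.exp (-((qnumR q (x + m) : ℂ)) * (t : ℂ))) +
  (t : ℂ) * ∑' m : ℕ, qcpow q (h * (m : ℂ) + (x : ℂ)) * χ (m : ZMod f) *
      Complex.exp (-((qnumR q (x + m) : ℂ)) * (t : ℂ))

/-! The integrand `F(-t) t^(s-2)` is the Mellin integrand of `F` at `s - 1`. Both parts of `F` are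
exponential series `∑ cₘ e^(-aₘ t)` with `aₘ ≥ a₀ > 0` and `∑ ‖cₘ‖ < ∞`; such a series is
dominated by `e^(-a₀ t) ∑ ‖cₘ‖`, so termwise integration gives the Mellin transform
`Γ(w) ∑ cₘ aₘ^(-w)`. The extra factor `t` in the second part shifts its exponent to `s`, and
`Γ(s) = (s - 1) Γ(s - 1)` produces the factor `1/(s - 1)` of the first part. -/

open MeasureTheory Set

lemma cexp_mul_ofReal_log {b : ℝ} (hb : 0 < b) (w : ℂ) :
    Complex.exp (w * (Real.log b : ℂ)) = (b : ℂ) ^ w := by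
  rw [Complex.ofReal_log hb.le, Complex.cpow_def_of_ne_zero (by exact_mod_cast hb.ne'), mul_comm]

noncomputable def expSeries (a : ℕ → ℝ) (c : ℕ → ℂ) (t : ℝ) : ℂ :=
  ∑' m, c m * Complex.exp (-(a m : ℂ) * t)

section ExpSeries

variable {a : ℕ → ℝ} {c : ℕ → ℂ} {a₀ : ℝ}

lemma norm_mul_cexp_neg_mul_le {b : ℝ} (hb : a₀ ≤ b) {t : ℝ} (ht : 0 ≤ t) (z : ℂ) :
    ‖z * Complex.exp (-(b : ℂ) * t)‖ ≤ ‖z‖ * Real.exp (-(a₀ * t)) := by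
  rw [norm_mul, Complex.norm_exp]
  gcongr
  simpa using mul_le_mul_of_nonneg_right hb ht

lemma summable_mul_cexp_neg_mul (ha : ∀ m, a₀ ≤ a m) (hc : Summable fun m => ‖c m‖)
    {t : ℝ} (ht : 0 ≤ t) : Summable fun m => c m * Complex.exp (-(a m : ℂ) * t) :=
  .of_norm_bounded (hc.mul_right _) fun m => norm_mul_cexp_neg_mul_le (ha m) ht (c m)

lemma norm_expSeries_le (ha : ∀ m, a₀ ≤ a m) (hc : Summable fun m => ‖c m‖)
    {t : ℝ} (ht : 0 ≤ t) : ‖expSeries a c t‖ ≤ (∑' m, ‖c m‖) * Real.exp (-(a₀ * t)) :=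
  tsum_of_norm_bounded (hc.hasSum.mul_right _) fun m =>
    norm_mul_cexp_neg_mul_le (ha m) ht (c m)

lemma continuousOn_expSeries (ha₀ : 0 ≤ a₀) (ha : ∀ m, a₀ ≤ a m)
    (hc : Summable fun m => ‖c m‖) : ContinuousOn (expSeries a c) (Ici 0) := by
  refine continuousOn_tsum (fun m => by fun_prop) hc fun m t (ht : 0 ≤ t) => ?_
  calc ‖c m * Complex.exp (-(a m : ℂ) * t)‖ ≤ ‖c m‖ * Real.exp (-(a₀ * t)) :=
        norm_mul_cexp_neg_mul_le (ha m) ht (c m)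
    _ ≤ ‖c m‖ := mul_le_of_le_one_right (norm_nonneg _)
        (Real.exp_le_one_iff.2 (neg_nonpos.2 (mul_nonneg ha₀ ht)))

lemma mellinConvergent_expSeries (ha₀ : 0 < a₀) (ha : ∀ m, a₀ ≤ a m)
    (hc : Summable fun m => ‖c m‖) {w : ℂ} (hw : 0 < w.re) :
    MellinConvergent (expSeries a c) w := by
  have hmeas : AEStronglyMeasurable (fun t : ℝ => (t : ℂ) ^ (w - 1) • expSeries a c t)
      (volume.restrict (Ioi 0)) := by
    refine ContinuousOn.aestronglyMeasurable (fun t (ht : 0 < t) => ?_) measurableSet_Ioi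
    exact (Complex.continuousAt_ofReal_cpow_const t (w - 1) (.inr ht.ne')).continuousWithinAt.smul
      ((continuousOn_expSeries ha₀.le ha hc).mono Ioi_subset_Ici_self t ht)
  have hdom : IntegrableOn
      (fun t : ℝ => (∑' m, ‖c m‖) * (t ^ (w.re - 1) * Real.exp (-a₀ * t))) (Ioi 0) := by
    have := integrableOn_rpow_mul_exp_neg_mul_rpow (s := w.re - 1) (by linarith) zero_lt_one ha₀
    simp only [Real.rpow_one] at this
    exact this.const_mul _
  refine hdom.mono' hmeas ((ae_restrict_iff' measurableSet_Ioi).2 (.of_forall fun t ht => ?_))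
  rw [norm_smul, Complex.norm_cpow_eq_rpow_re_of_pos ht, Complex.sub_re, Complex.one_re,
    mul_left_comm, neg_mul]
  exact mul_le_mul_of_nonneg_left (norm_expSeries_le ha hc (le_of_lt ht))
    (Real.rpow_nonneg (le_of_lt ht) _)

lemma summable_norm_div_rpow (ha₀ : 0 < a₀) (ha : ∀ m, a₀ ≤ a m)
    (hc : Summable fun m => ‖c m‖) {w : ℝ} (hw : 0 ≤ w) :
    Summable fun m => ‖c m‖ / a m ^ w :=
  .of_nonneg_of_le
    (fun m => div_nonneg (norm_nonneg _) (Real.rpow_nonneg (ha₀.trans_le (ha m)).le _))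
    (fun m => by gcongr; exact ha m) (hc.div_const (a₀ ^ w))

lemma summable_div_cpow (ha₀ : 0 < a₀) (ha : ∀ m, a₀ ≤ a m)
    (hc : Summable fun m => ‖c m‖) {w : ℂ} (hw : 0 ≤ w.re) :
    Summable fun m => c m / (a m : ℂ) ^ w :=
  .of_norm_bounded (summable_norm_div_rpow ha₀ ha hc hw) fun m => by
    rw [norm_div, Complex.norm_cpow_eq_rpow_re_of_pos (ha₀.trans_le (ha m))]

lemma hasMellin_expSeries (ha₀ : 0 < a₀) (ha : ∀ m, a₀ ≤ a m)
    (hc : Summable fun m => ‖c m‖) {w : ℂ} (hw : 0 < w.re) :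
    HasMellin (expSeries a c) w (Complex.Gamma w * ∑' m, c m / (a m : ℂ) ^ w) := by
  refine ⟨mellinConvergent_expSeries ha₀ ha hc hw, ?_⟩
  have hsum := hasSum_mellin (F := expSeries a c) (fun m => .inr (ha₀.trans_le (ha m))) hw
    (fun t ht => by
      simpa only [expSeries, Complex.ofReal_exp, Complex.ofReal_mul, Complex.ofReal_neg] using
        (summable_mul_cexp_neg_mul ha hc (le_of_lt ht)).hasSum)
    (summable_norm_div_rpow ha₀ ha hc hw.le)
  simp only [← hsum.tsum_eq, mul_div_assoc, tsum_mul_left]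

end ExpSeries

lemma norm_qcpow (q : ℝ) (z : ℂ) : ‖qcpow q z‖ = Real.exp (z.re * Real.log q) := by
  simp [qcpow, Complex.norm_exp, Complex.mul_re]

section QSeries

variable {q : ℝ}

lemma summable_norm_qcpow_mul_add_mul (hq0 : 0 < q) (hq1 : q < 1) {z : ℂ} (hz : 0 < z.re)
    (w : ℂ) {b : ℕ → ℂ} (hb : ∀ m, ‖b m‖ ≤ 1) :
    Summable fun m : ℕ => ‖qcpow q (z * m + w) * b m‖ := by
  have hρ : Real.exp (z.re * Real.log q) < 1 :=
    Real.exp_lt_one_iff.2 (mul_neg_of_pos_of_neg hz (Real.log_neg hq0 hq1))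
  refine .of_nonneg_of_le (fun m => norm_nonneg _) (fun m => ?_)
    ((summable_geometric_of_lt_one (Real.exp_pos _).le hρ).mul_left
      (Real.exp (w.re * Real.log q)))
  calc ‖qcpow q (z * m + w) * b m‖ ≤ ‖qcpow q (z * m + w)‖ := by
        rw [norm_mul]; exact mul_le_of_le_one_right (norm_nonneg _) (hb m)
    _ = Real.exp (w.re * Real.log q) * Real.exp (z.re * Real.log q) ^ m := by
        rw [norm_qcpow, ← Real.exp_nat_mul, ← Real.exp_add]
        congr 1
        simp only [Complex.add_re, Complex.mul_re, Complex.natCast_re, Complex.natCast_im]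
        ring

lemma summable_norm_qcpow_sub_one_mul_dirichlet (hq0 : 0 < q) (hq1 : q < 1) {h : ℂ}
    (hh : 1 < h.re) {f : ℕ} (χ : DirichletCharacter ℂ f) :
    Summable fun m : ℕ => ‖qcpow q ((h - 1) * m) * χ m‖ := by
  simpa only [add_zero] using summable_norm_qcpow_mul_add_mul hq0 hq1 (z := h - 1)
    (by rw [Complex.sub_re, Complex.one_re]; linarith) 0 (b := fun m : ℕ => χ m)
    fun _ => χ.norm_le_one _

lemma summable_norm_qcpow_add_mul_dirichlet (hq0 : 0 < q) (hq1 : q < 1) {h : ℂ}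
    (hh : 0 < h.re) {f : ℕ} (χ : DirichletCharacter ℂ f) (x : ℝ) :
    Summable fun m : ℕ => ‖qcpow q (h * m + x) * χ m‖ :=
  summable_norm_qcpow_mul_add_mul hq0 hq1 hh x (b := fun m : ℕ => χ m) fun _ => χ.norm_le_one _

lemma qnumR_pos (hq0 : 0 < q) (hq1 : q < 1) {y : ℝ} (hy : 0 < y) : 0 < qnumR q y :=
  div_pos (sub_pos.2 (Real.exp_lt_one_iff.2 (mul_neg_of_pos_of_neg hy (Real.log_neg hq0 hq1))))
    (sub_pos.2 hq1)

lemma qnumR_monotone (hq0 : 0 < q) (hq1 : q < 1) : Monotone (qnumR q) := fun _ _ hyz =>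
  div_le_div_of_nonneg_right
    (sub_le_sub_left
      (Real.exp_le_exp.2 (mul_le_mul_of_nonpos_right hyz (Real.log_neg hq0 hq1).le)) 1)
    (sub_pos.2 hq1).le

end QSeries

lemma hasMellin_FchiNeg {q : ℝ} (hq0 : 0 < q) (hq1 : q < 1) {h : ℂ} (hh : 1 < h.re) {f : ℕ}
    (χ : DirichletCharacter ℂ f) {x : ℝ} (hx : 0 < x) {s : ℂ} (hs : 1 < s.re) :
    HasMellin (FchiNeg q h f χ x) (s - 1)
      ((h - 1) * (1 - q) * (Complex.Gamma (s - 1) *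
          ∑' m : ℕ, qcpow q ((h - 1) * m) * χ m / (qnumR q (x + m) : ℂ) ^ (s - 1)) +
        Complex.Gamma s * ∑' m : ℕ, qcpow q (h * m + x) * χ m / (qnumR q (x + m) : ℂ) ^ s) := by
  have ha (m : ℕ) : qnumR q x ≤ qnumR q (x + m) :=
    qnumR_monotone hq0 hq1 (le_add_of_nonneg_right m.cast_nonneg)
  have H1 := hasMellin_expSeries (qnumR_pos hq0 hq1 hx) ha
    (summable_norm_qcpow_sub_one_mul_dirichlet hq0 hq1 hh χ) (w := s - 1)
    (by rw [Complex.sub_re, Complex.one_re]; linarith)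
  have H2 := hasMellin_expSeries (qnumR_pos hq0 hq1 hx) ha
    (summable_norm_qcpow_add_mul_dirichlet hq0 hq1 (by linarith : 0 < h.re) χ x) (w := s)
    (by linarith)
  have H2' := (MellinConvergent.cpow_smul (a := 1) (s := s - 1)).2
    (by rw [sub_add_cancel]; exact H2.1)
  have hF : FchiNeg q h f χ x = fun t =>
      ((h - 1) * (1 - q)) • expSeries (fun m : ℕ => qnumR q (x + m))
          (fun m : ℕ => qcpow q ((h - 1) * m) * χ m) t +
        (t : ℂ) ^ (1 : ℂ) • expSeries (fun m : ℕ => qnumR q (x + m))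
          (fun m : ℕ => qcpow q (h * m + x) * χ m) t := by
    ext t
    simp only [smul_eq_mul, Complex.cpow_one]
    rfl
  obtain ⟨hconv, hval⟩ := hasMellin_add (H1.1.const_smul ((h - 1) * (1 - q))) H2'
  rw [hF]
  refine ⟨hconv, ?_⟩
  rw [hval, mellin_const_smul, mellin_cpow_smul, sub_add_cancel, H1.2, H2.2, smul_eq_mul]

theorem hqLH_integral_representation_general (q : ℝ) (hq0 : 0 < q) (hq1 : q < 1)
    (h : ℂ) (hh : 1 < h.re) (f : ℕ) (χ : DirichletCharacter ℂ f)
    (x : ℝ) (hx : 0 < x) (s : ℂ) (hs : 1 < s.re) :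
    (∀ t : ℝ, 0 < t →
      Summable (fun m : ℕ => qcpow q ((h - 1) * (m : ℂ)) * χ (m : ZMod f) *
        Complex.exp (-((qnumR q (x + m) : ℂ)) * (t : ℂ))) ∧
      Summable (fun m : ℕ => qcpow q (h * (m : ℂ) + (x : ℂ)) * χ (m : ZMod f) *
        Complex.exp (-((qnumR q (x + m) : ℂ)) * (t : ℂ)))) ∧
    MeasureTheory.IntegrableOn
      (fun t : ℝ => FchiNeg q h f χ x t * Complex.exp ((s - 2) * (Real.log t : ℂ)))
      (Set.Ioi 0) ∧
    Summable (fun m : ℕ => qcpow q ((h - 1) * (m : ℂ)) * χ (m : ZMod f) /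
      Complex.exp ((s - 1) * (Real.log (qnumR q (x + m)) : ℂ))) ∧
    Summable (fun m : ℕ => qcpow q (h * (m : ℂ) + (x : ℂ)) * χ (m : ZMod f) /
      Complex.exp (s * (Real.log (qnumR q (x + m)) : ℂ))) ∧
    (1 / Complex.Gamma s) *
        ∫ t in Set.Ioi (0 : ℝ), FchiNeg q h f χ x t * Complex.exp ((s - 2) * (Real.log t : ℂ)) =
      hqLH q h s f χ x := by
  have ha₀ : 0 < qnumR q x := qnumR_pos hq0 hq1 hx
  have ha (m : ℕ) : qnumR q x ≤ qnumR q (x + m) :=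
    qnumR_monotone hq0 hq1 (le_add_of_nonneg_right m.cast_nonneg)
  have hc₁ := summable_norm_qcpow_sub_one_mul_dirichlet hq0 hq1 hh χ
  have hc₂ := summable_norm_qcpow_add_mul_dirichlet hq0 hq1 (by linarith : 0 < h.re) χ x
  have hs₁ : 0 < (s - 1).re := by rw [Complex.sub_re, Complex.one_re]; linarith
  have hpow (w : ℂ) (m : ℕ) :
      Complex.exp (w * Real.log (qnumR q (x + m))) = (qnumR q (x + m) : ℂ) ^ w :=
    cexp_mul_ofReal_log (ha₀.trans_le (ha m)) w
  have hintegrand : EqOn (fun t : ℝ => (t : ℂ) ^ (s - 1 - 1) • FchiNeg q h f χ x t)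
      (fun t : ℝ => FchiNeg q h f χ x t * Complex.exp ((s - 2) * (Real.log t : ℂ))) (Ioi 0) :=
    fun t ht => by
      dsimp only
      rw [cexp_mul_ofReal_log ht, smul_eq_mul, mul_comm, sub_sub, one_add_one_eq_two]
  obtain ⟨hconv, hmellin⟩ := hasMellin_FchiNeg hq0 hq1 hh χ hx hs
  simp only [hpow]
  refine ⟨fun t ht =>
      ⟨summable_mul_cexp_neg_mul ha hc₁ ht.le, summable_mul_cexp_neg_mul ha hc₂ ht.le⟩,
    hconv.congr_fun hintegrand measurableSet_Ioi, summable_div_cpow ha₀ ha hc₁ hs₁.le,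
    summable_div_cpow ha₀ ha hc₂ (by linarith), ?_⟩
  have hs₁' : s - 1 ≠ 0 := Complex.ne_zero_of_re_pos hs₁
  have hΓ : Complex.Gamma s = (s - 1) * Complex.Gamma (s - 1) := by
    simpa only [sub_add_cancel] using Complex.Gamma_add_one (s - 1) hs₁'
  have hΓ₁ : Complex.Gamma (s - 1) ≠ 0 := Complex.Gamma_ne_zero_of_re_pos hs₁
  rw [← setIntegral_congr_fun measurableSet_Ioi hintegrand, ← mellin, hmellin, hqLH]
  simp only [hpow, hΓ]
  field_simp

/-- integral representation
`(1/Γ(s)) ∫_0^∞ F_{χ,q}(-t, x | h) t^{s-2} dt = L_q^h(s, χ | x)` for `Re(s) > 1`,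
with all series and the integral converging absolutely. -/
theorem hqLH_integral_representation (q : ℝ) (hq0 : 0 < q) (hq1 : q < 1)
    (h : ℂ) (hh : 1 < h.re) (f : ℕ) (hf : 1 ≤ f) (χ : DirichletCharacter ℂ f)
    (x : ℝ) (hx : 0 < x) (s : ℂ) (hs : 1 < s.re) :
    (∀ t : ℝ, 0 < t →
      Summable (fun m : ℕ => qcpow q ((h - 1) * (m : ℂ)) * χ (m : ZMod f) *
        Complex.exp (-((qnumR q (x + m) : ℂ)) * (t : ℂ))) ∧
      Summable (fun m : ℕ => qcpow q (h * (m : ℂ) + (x : ℂ)) * χ (m : ZMod f) *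
        Complex.exp (-((qnumR q (x + m) : ℂ)) * (t : ℂ)))) ∧
    MeasureTheory.IntegrableOn
      (fun t : ℝ => FchiNeg q h f χ x t * Complex.exp ((s - 2) * (Real.log t : ℂ)))
      (Set.Ioi 0) ∧
    Summable (fun m : ℕ => qcpow q ((h - 1) * (m : ℂ)) * χ (m : ZMod f) /
      Complex.exp ((s - 1) * (Real.log (qnumR q (x + m)) : ℂ))) ∧
    Summable (fun m : ℕ => qcpow q (h * (m : ℂ) + (x : ℂ)) * χ (m : ZMod f) /
      Complex.exp (s * (Real.log (qnumR q (x + m)) : ℂ))) ∧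
    (1 / Complex.Gamma s) *
        ∫ t in Set.Ioi (0 : ℝ), FchiNeg q h f χ x t * Complex.exp ((s - 2) * (Real.log t : ℂ)) =
      hqLH q h s f χ x :=
  hqLH_integral_representation_general q hq0 hq1 h hh f χ x hx s hs
end
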